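/- arXiv:1807.10455 — 2 statements merged into one kernel-verified Lean document; each statement's English description precedes it below -/
import Mathlib

section
/- Let 𝒦 ⊆ ℝ^d be convex, let R : 𝒦 → ℝ be β-strongly convex with respect to a norm ‖·‖ (dual norm ‖·‖_*), let η > 0, let θ_1, …, θ_T ∈ ℝ^d be loss vectors with L_t = Σ_{s=1}^t θ_s, and let m_1, …, m_T ∈ ℝ^d be arbitrary guess vectors. Define the Optimistic-FTRL iterates x_t = argmin_{x ∈ 𝒦} [⟨x, L_{t−1} + m_t⟩ + (1/η) R(x)], the FTRL iterates z_t = argmin_{x ∈ 𝒦} [⟨x, L_{t−1}⟩ + (1/η) R(x)] (so z_1 = argmin_{x ∈ 𝒦} R(x)), and D_T = Σ_{t=1}^T [ (β/2)‖x_t − z_t‖² + (β/2)‖x_t − z_{t+1}‖² ]. Then for every x* ∈ 𝒦, Σ_{t=1}^T ⟨x_t − x*, θ_t⟩ ≤ ( R(x*) − R(z_1) − D_T ) / η + Σ_{t=1}^T (η/β) ‖θ_t − m_t‖_*². -/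
open scoped RealInnerProductSpace
open Finset

/-!
Compare each Optimistic-FTRL iterate `x_t` with the FTRL iterates `z_t` and `z_{t+1}`. Strong
convexity turns the minimality of `x_t`, `z_t`, `z_{t+1}` for their objectives into quadratic-growth
inequalities. Added up, they bound `⟪x_t, θ_t⟫` by the increase `Φ_{t+1} - Φ_t` of the FTRL optimal
value, plus the cross term `⟪x_t - z_{t+1}, θ_t - m_t⟫`, minus the two distance terms of `D_T`; the
stability bound `‖x_t - z_{t+1}‖ ≤ (η/β) ‖θ_t - m_t‖_*` makes the cross term at most
`(η/β) ‖θ_t - m_t‖_*²`. Summing telescopes `Φ`, with `Φ_1 = R(z_1)/η` and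
`Φ_{T+1} ≤ ⟪x*, L_T⟫ + R(x*)/η`.
-/

/-- The dual norm of a norm `N` on ℝ^d: `‖y‖_* = sup {⟪x, y⟫ : N x ≤ 1}`. -/
noncomputable def dualNorm {d : ℕ} (N : EuclideanSpace ℝ (Fin d) → ℝ)
    (y : EuclideanSpace ℝ (Fin d)) : ℝ :=
  sSup ((fun x => ⟪x, y⟫) '' {x | N x ≤ 1})

section StrongConvexity

variable {E : Type*} [AddCommGroup E] [Module ℝ E]

def StrongConvexOnWrt (N : E → ℝ) (K : Set E) (σ : ℝ) (f : E → ℝ) : Prop :=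
  ∀ u ∈ K, ∀ v ∈ K, ∀ a : ℝ, 0 ≤ a → a ≤ 1 →
    f (a • u + (1 - a) • v) ≤ a * f u + (1 - a) * f v - σ / 2 * a * (1 - a) * N (u - v) ^ 2

variable {N : E → ℝ} {K : Set E} {σ : ℝ} {f : E → ℝ}

lemma StrongConvexOnWrt.const_mul (hf : StrongConvexOnWrt N K σ f) {c : ℝ} (hc : 0 ≤ c) :
    StrongConvexOnWrt N K (c * σ) (fun w => c * f w) := by
  intro u hu v hv a ha₀ ha₁
  have h := mul_le_mul_of_nonneg_left (hf u hu v hv a ha₀ ha₁) hc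
  linarith

/-- Let the convex combination `a • w + (1 - a) • p` tend to `p`. -/
lemma StrongConvexOnWrt.add_sq_le_of_isMinOn (hK : Convex ℝ K) (hf : StrongConvexOnWrt N K σ f)
    {p w : E} (hp : p ∈ K) (hmin : IsMinOn f K p) (hw : w ∈ K) :
    f p + σ / 2 * N (w - p) ^ 2 ≤ f w := by
  set q := σ / 2 * N (w - p) ^ 2
  have hsmall : ∀ a ∈ Set.Ioo (0 : ℝ) 1, q * (1 - a) ≤ f w - f p := by
    rintro a ⟨ha₀, ha₁⟩
    have hconv := hf w hw p hp a ha₀.le ha₁.le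
    have hle := isMinOn_iff.mp hmin _
      (hK hw hp ha₀.le (sub_nonneg.mpr ha₁.le) (add_sub_cancel a 1))
    have : a * (q * (1 - a)) ≤ a * (f w - f p) := by simp only [q]; linarith
    exact le_of_mul_le_mul_left this ha₀
  have hlim : Filter.Tendsto (fun a : ℝ => q * (1 - a)) (nhdsWithin 0 (Set.Ioi 0)) (nhds q) := by
    have : Continuous fun a : ℝ => q * (1 - a) := by fun_prop
    simpa using (this.tendsto 0).mono_left nhdsWithin_le_nhds
  have := le_of_tendsto hlim (Filter.eventually_of_mem (Ioo_mem_nhdsGT one_pos) hsmall)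
  linarith

end StrongConvexity

section InnerProduct

variable {E : Type*} [NormedAddCommGroup E] [InnerProductSpace ℝ E]

lemma StrongConvexOnWrt.inner_add {N : E → ℝ} {K : Set E} {σ : ℝ} {f : E → ℝ}
    (hf : StrongConvexOnWrt N K σ f) (v : E) :
    StrongConvexOnWrt N K σ (fun w => ⟪w, v⟫ + f w) := by
  intro u hu w hw a ha₀ ha₁
  have h := hf u hu w hw a ha₀ ha₁
  simp only [inner_add_left, real_inner_smul_left]
  linarith

noncomputable def ftrlObjective (η : ℝ) (R : E → ℝ) (L w : E) : ℝ := ⟪w, L⟫ + (1 / η) * R w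

lemma ftrlObjective_add (η : ℝ) (R : E → ℝ) (L v w : E) :
    ftrlObjective η R (L + v) w = ftrlObjective η R L w + ⟪w, v⟫ := by
  simp only [ftrlObjective, inner_add_right]
  ring

lemma StrongConvexOnWrt.ftrlObjective {N : E → ℝ} {K : Set E} {β η : ℝ} {R : E → ℝ}
    (hR : StrongConvexOnWrt N K β R) (hη : 0 < η) (L : E) :
    StrongConvexOnWrt N K (β / η) (ftrlObjective η R L) := by
  have h := (hR.const_mul (one_div_pos.mpr hη).le).inner_add L
  rwa [one_div_mul_eq_div] at h

/-- One round: `x` is the optimistic iterate, `z` and `z'` the current and next FTRL iterates.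
The growth inequalities at `x` and `z'` add up to the stability bound
`β / η * p (x - z') ^ 2 ≤ p (x - z') * c`. -/
lemma inner_le_ftrlObjective_sub {p : Seminorm ℝ E} {K : Set E} (hK : Convex ℝ K) {β η : ℝ}
    {R : E → ℝ} (hR : StrongConvexOnWrt p K β R) (hβ : 0 < β) (hη : 0 < η)
    {L θ m x z z' : E} {c : ℝ}
    (hc : ⟪x - z', θ - m⟫ ≤ p (x - z') * c)
    (hx : x ∈ K) (hxmin : IsMinOn (ftrlObjective η R (L + m)) K x)
    (hz : z ∈ K) (hzmin : IsMinOn (ftrlObjective η R L) K z)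
    (hz' : z' ∈ K) (hz'min : IsMinOn (ftrlObjective η R (L + θ)) K z') :
    ⟪x, θ⟫ ≤ ftrlObjective η R (L + θ) z' - ftrlObjective η R L z + η / β * c ^ 2
      - (β / 2 * p (x - z) ^ 2 + β / 2 * p (x - z') ^ 2) / η := by
  have hF := fun v => hR.ftrlObjective hη v
  have h_opt := (hF _).add_sq_le_of_isMinOn hK hx hxmin hz'
  have h_next := (hF _).add_sq_le_of_isMinOn hK hz' hz'min hx
  have h_cur := (hF _).add_sq_le_of_isMinOn hK hz hzmin hx
  rw [map_sub_rev] at h_opt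
  simp only [ftrlObjective_add] at h_opt h_next ⊢
  rw [inner_sub_left, inner_sub_right, inner_sub_right] at hc
  set a := p (x - z)
  set b := p (x - z')
  have hstable : β / η * b ^ 2 ≤ b * c := by linarith
  have hamgm : b * c ≤ η / β * c ^ 2 := by
    have hsq : η / β * c ^ 2 - b * c = η / β * (c - β / η * b) ^ 2 + (b * c - β / η * b ^ 2) := by
      field_simp
      ring
    nlinarith [sq_nonneg (c - β / η * b), div_pos hη hβ]
  have hsplit : (β / 2 * a ^ 2 + β / 2 * b ^ 2) / η = β / η / 2 * a ^ 2 + β / η / 2 * b ^ 2 := by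
    ring
  linarith

end InnerProduct

section FiniteDimensional

variable {E : Type*} [NormedAddCommGroup E] [NormedSpace ℝ E] [FiniteDimensional ℝ E]

/-- Equivalence of norms in finite dimension, one direction: minimise `p` on the unit sphere. -/
lemma Seminorm.exists_pos_mul_norm_le (p : Seminorm ℝ E) (hp : ∀ u, p u = 0 → u = 0) :
    ∃ c > 0, ∀ u, c * ‖u‖ ≤ p u := by
  rcases subsingleton_or_nontrivial E with hE | hE
  · exact ⟨1, one_pos, fun u => by simp [Subsingleton.elim u 0]⟩
  have hcont : Continuous p := p.convexOn.locallyLipschitz.continuous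
  obtain ⟨e, he, hmin⟩ := (isCompact_sphere (0 : E) 1).exists_isMinOn
    (NormedSpace.sphere_nonempty.mpr zero_le_one) hcont.continuousOn
  have he₁ : ‖e‖ = 1 := by simpa using he
  have hpos : 0 < p e :=
    (apply_nonneg p e).lt_of_ne fun h => by simp [hp e h.symm] at he₁
  refine ⟨p e, hpos, fun u => ?_⟩
  rcases eq_or_ne u 0 with rfl | hu
  · simp
  have hnorm : 0 < ‖u‖ := norm_pos_iff.mpr hu
  have hle : p e ≤ p (‖u‖⁻¹ • u) := isMinOn_iff.mp hmin _ (by simp [norm_smul, hnorm.ne'])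
  rw [map_smul_eq_mul, norm_inv, norm_norm] at hle
  rwa [le_inv_mul_iff₀ hnorm, mul_comm] at hle

end FiniteDimensional

lemma Seminorm.bddAbove_inner_image {E : Type*} [NormedAddCommGroup E] [InnerProductSpace ℝ E]
    [FiniteDimensional ℝ E] (p : Seminorm ℝ E) (hp : ∀ u, p u = 0 → u = 0) (y : E) :
    BddAbove ((fun x => ⟪x, y⟫) '' {x | p x ≤ 1}) := by
  obtain ⟨c, hc, hcp⟩ := p.exists_pos_mul_norm_le hp
  refine ⟨c⁻¹ * ‖y‖, ?_⟩
  rintro r ⟨v, hv, rfl⟩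
  have hv' : ‖v‖ ≤ c⁻¹ := by
    rw [← mul_one c⁻¹]
    exact (le_inv_mul_iff₀ hc).mpr ((hcp v).trans hv)
  exact (real_inner_le_norm v y).trans (mul_le_mul_of_nonneg_right hv' (norm_nonneg y))

lemma real_inner_le_mul_dualNorm {d : ℕ} (p : Seminorm ℝ (EuclideanSpace ℝ (Fin d)))
    (hp : ∀ u, p u = 0 → u = 0) (u y : EuclideanSpace ℝ (Fin d)) :
    ⟪u, y⟫ ≤ p u * dualNorm p y := by
  rcases eq_or_ne u 0 with rfl | hu
  · simp only [inner_zero_left, map_zero, zero_mul, le_refl]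
  have hpos : 0 < p u := (apply_nonneg p u).lt_of_ne fun h => hu (hp u h.symm)
  have hunit : p ((p u)⁻¹ • u) ≤ 1 := by
    rw [map_smul_eq_mul, Real.norm_eq_abs, abs_inv, abs_of_pos hpos, inv_mul_cancel₀ hpos.ne']
  have hle : ⟪(p u)⁻¹ • u, y⟫ ≤ dualNorm p y :=
    le_csSup (p.bddAbove_inner_image hp y) ⟨_, hunit, rfl⟩
  rw [real_inner_smul_left, inv_mul_le_iff₀ hpos] at hle
  exact hle

/-- regret bound for Optimistic-FTRL with guesses `m_t`:
`Σ_t ⟪x_t - x*, θ_t⟫ ≤ (R(x*) - R(z_1) - D_T)/η + Σ_t (η/β)‖θ_t - m_t‖_*²`. -/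
theorem optimistic_ftrl_regret {d : ℕ}
    (K : Set (EuclideanSpace ℝ (Fin d))) (hK : Convex ℝ K)
    (N : EuclideanSpace ℝ (Fin d) → ℝ)
    -- N is a norm
    (hN_add : ∀ u v, N (u + v) ≤ N u + N v)
    (hN_smul : ∀ (a : ℝ) (u : EuclideanSpace ℝ (Fin d)), N (a • u) = |a| * N u)
    (hN_zero : ∀ u, N u = 0 → u = 0)
    -- R is β-strongly convex with respect to N on K
    (R : EuclideanSpace ℝ (Fin d) → ℝ) (β : ℝ) (hβ : 0 < β)
    (hR : ∀ u ∈ K, ∀ v ∈ K, ∀ a : ℝ, 0 ≤ a → a ≤ 1 →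
      R (a • u + (1 - a) • v)
        ≤ a * R u + (1 - a) * R v - β / 2 * a * (1 - a) * (N (u - v)) ^ 2)
    (η : ℝ) (hη : 0 < η)
    (T : ℕ)
    (θ m : ℕ → EuclideanSpace ℝ (Fin d))
    (Lvec : ℕ → EuclideanSpace ℝ (Fin d)) (hLvec : ∀ t, Lvec t = ∑ s ∈ Icc 1 t, θ s)
    -- the Optimistic-FTRL iterates x_t and the FTRL iterates z_t
    (x z : ℕ → EuclideanSpace ℝ (Fin d))
    (hx : ∀ t, 1 ≤ t → t ≤ T → x t ∈ K ∧ ∀ w ∈ K,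
      ⟪x t, Lvec (t - 1) + m t⟫ + (1 / η) * R (x t)
        ≤ ⟪w, Lvec (t - 1) + m t⟫ + (1 / η) * R w)
    (hzmem : ∀ t, 1 ≤ t → t ≤ T + 1 → z t ∈ K ∧ ∀ w ∈ K,
      ⟪z t, Lvec (t - 1)⟫ + (1 / η) * R (z t) ≤ ⟪w, Lvec (t - 1)⟫ + (1 / η) * R w)
    (D : ℝ)
    (hD : D = ∑ t ∈ Icc 1 T,
      (β / 2 * (N (x t - z t)) ^ 2 + β / 2 * (N (x t - z (t + 1))) ^ 2)) :
    ∀ xstar ∈ K,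
      ∑ t ∈ Icc 1 T, ⟪x t - xstar, θ t⟫
        ≤ (R xstar - R (z 1) - D) / η
          + ∑ t ∈ Icc 1 T, (η / β) * (dualNorm N (θ t - m t)) ^ 2 := by
  intro xstar hxstar
  let p : Seminorm ℝ (EuclideanSpace ℝ (Fin d)) :=
    .of N hN_add fun a u => by rw [hN_smul, Real.norm_eq_abs]
  let Φ t := ftrlObjective η R (Lvec (t - 1)) (z t)
  have hstep : ∀ t ∈ Icc 1 T, ⟪x t, θ t⟫ ≤ Φ (t + 1) - Φ t + η / β * dualNorm N (θ t - m t) ^ 2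
      - (β / 2 * N (x t - z t) ^ 2 + β / 2 * N (x t - z (t + 1)) ^ 2) / η := by
    intro t ht
    obtain ⟨ht₁, htT⟩ := mem_Icc.mp ht
    have hL : Lvec t = Lvec (t - 1) + θ t := by
      obtain ⟨s, rfl⟩ := Nat.exists_eq_add_of_le' ht₁
      rw [hLvec, hLvec, sum_Icc_succ_top (by omega), Nat.add_sub_cancel]
    obtain ⟨hxK, hxmin⟩ := hx t ht₁ htT
    obtain ⟨hzK, hzmin⟩ := hzmem t ht₁ (by omega)
    obtain ⟨hz'K, hz'min⟩ := hzmem (t + 1) (by omega) (by omega)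
    rw [Nat.add_sub_cancel, hL] at hz'min
    have := inner_le_ftrlObjective_sub (p := p) hK hR hβ hη
      (real_inner_le_mul_dualNorm p hN_zero _ (θ t - m t))
      hxK (isMinOn_iff.mpr hxmin) hzK (isMinOn_iff.mpr hzmin) hz'K (isMinOn_iff.mpr hz'min)
    have hpN : ⇑p = N := rfl
    simpa only [Φ, Nat.add_sub_cancel, hL, hpN] using this
  have htele : ∑ t ∈ Icc 1 T, (Φ (t + 1) - Φ t) = Φ (T + 1) - Φ 1 := by
    rw [← Ico_add_one_right_eq_Icc, sum_Ico_sub Φ (by omega)]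
  have hfirst : Φ 1 = R (z 1) / η := by
    simp [Φ, ftrlObjective, hLvec, div_eq_inv_mul]
  have hlast : Φ (T + 1) ≤ ⟪xstar, Lvec T⟫ + R xstar / η := by
    simpa [Φ, ftrlObjective, div_eq_inv_mul] using (hzmem (T + 1) (by omega) le_rfl).2 xstar hxstar
  have hcomparator : ∑ t ∈ Icc 1 T, ⟪xstar, θ t⟫ = ⟪xstar, Lvec T⟫ := by
    rw [hLvec, inner_sum]
  have hsum := sum_le_sum hstep
  simp only [sum_sub_distrib, sum_add_distrib, ← sum_div, htele] at hsum
  simp only [inner_sub_left, sum_sub_distrib, hcomparator]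
  rw [hD, sum_add_distrib, sub_div, sub_div]
  linarith
end

section
/- Let 𝒦 ⊆ ℝ^d be convex, let φ : ℝ^d → ℝ be differentiable with Bregman divergence V_c(x) = φ(x) − ⟨∇φ(c), x − c⟩ − φ(c), let θ : 𝒦 → ℝ be a convex function, let c ∈ 𝒦, and let x⁺ = argmin_{x ∈ 𝒦} [θ(x) + V_c(x)]. Then for every x* ∈ 𝒦, θ(x⁺) − θ(x*) ≤ V_c(x*) − V_{x⁺}(x*) − V_c(x⁺). -/
open scoped RealInnerProductSpace

/-!
The three-point identity turns `V_c(x*) - V_{x⁺}(x*) - V_c(x⁺)` into `⟪∇φ x⁺ - ∇φ c, x* - x⁺⟫`,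
the derivative of `V_c` at `x⁺` in the direction `x* - x⁺`. Along the segment `[x⁺, x*]` convexity
bounds `θ` by its chord, so `t ↦ V_c(x⁺ + t (x* - x⁺)) + t (θ x* - θ x⁺)` is minimal at `t = 0`
on `[0, 1]`; its right derivative there is therefore nonnegative, which is the claim.
-/

theorem IsMinOn.hasDerivAt_nonneg_of_Icc {F : ℝ → ℝ} {F' a b : ℝ} (hab : a < b)
    (hmin : IsMinOn F (Set.Icc a b) a) (hF : HasDerivAt F F' a) : 0 ≤ F' := by
  have hone : (1 : ℝ) ∈ posTangentConeAt (Set.Icc a b) a := by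
    refine mem_posTangentConeAt_of_frequently_mem (Filter.Eventually.frequently ?_)
    filter_upwards [Ioo_mem_nhdsGT (sub_pos.2 hab)] with t ht
    rw [smul_eq_mul, mul_one]
    exact ⟨by linarith [ht.1], by linarith [ht.2]⟩
  simpa using hmin.localize.hasFDerivWithinAt_nonneg hF.hasFDerivAt.hasFDerivWithinAt hone

variable {E : Type*}

section Normed

variable [NormedAddCommGroup E] [NormedSpace ℝ E]

theorem ConvexOn.sub_le_fderiv_of_isMinOn_add {K : Set E} {θ f : E → ℝ} {f' : E →L[ℝ] ℝ}
    {x y : E} (hθ : ConvexOn ℝ K θ) (hf : HasFDerivAt f f' x) (hx : x ∈ K) (hy : y ∈ K)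
    (hmin : IsMinOn (θ + f) K x) : θ x - θ y ≤ f' (y - x) := by
  set F : ℝ → ℝ := fun t => f (x + t • (y - x)) + t * (θ y - θ x)
  have hF : HasDerivAt F (f' (y - x) + (θ y - θ x)) 0 := by
    have hline : HasDerivAt (fun t : ℝ => x + t • (y - x)) (y - x) 0 := by
      simpa using ((hasDerivAt_id (0 : ℝ)).smul_const (y - x)).const_add x
    have hf0 : HasFDerivAt f f' (x + (0 : ℝ) • (y - x)) := by simpa using hf
    have h := (hf0.comp_hasDerivAt 0 hline).add ((hasDerivAt_id 0).mul_const (θ y - θ x))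
    rw [one_mul] at h
    exact h
  have hFmin : IsMinOn F (Set.Icc 0 1) 0 := by
    intro t ⟨ht0, ht1⟩
    have hconv := hθ.2 hx hy (sub_nonneg.2 ht1) ht0 (by ring)
    have hmin_t : θ x + f x ≤ θ _ + f _ := hmin (hθ.1.add_smul_sub_mem hx hy ⟨ht0, ht1⟩)
    have hseg : (1 - t) • x + t • y = x + t • (y - x) := by module
    rw [hseg, smul_eq_mul, smul_eq_mul] at hconv
    change f (x + 0 • (y - x)) + 0 * (θ y - θ x) ≤ f (x + t • (y - x)) + t * (θ y - θ x)
    rw [zero_smul, add_zero, zero_mul, add_zero]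
    linarith
  linarith [hFmin.hasDerivAt_nonneg_of_Icc one_pos hF]

end Normed

section Inner

open InnerProductSpace

variable [NormedAddCommGroup E] [InnerProductSpace ℝ E] [CompleteSpace E]

noncomputable def bregmanDiv (φ : E → ℝ) (c x : E) : ℝ := φ x - ⟪gradient φ c, x - c⟫ - φ c

theorem bregmanDiv_sub_bregmanDiv_sub_bregmanDiv (φ : E → ℝ) (c x y : E) :
    bregmanDiv φ c y - bregmanDiv φ x y - bregmanDiv φ c x =
      ⟪gradient φ x - gradient φ c, y - x⟫ := by
  have hsplit : y - c = (y - x) + (x - c) := by abel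
  simp only [bregmanDiv, hsplit, inner_add_right, inner_sub_left]
  ring

theorem hasGradientAt_bregmanDiv {φ : E → ℝ} {x : E} (hφ : DifferentiableAt ℝ φ x) (c : E) :
    HasGradientAt (bregmanDiv φ c) (gradient φ x - gradient φ c) x := by
  rw [hasGradientAt_iff_hasFDerivAt, map_sub]
  have hlin : HasFDerivAt (fun y => ⟪gradient φ c, y - c⟫) (toDual ℝ E (gradient φ c)) x :=
    (toDual ℝ E (gradient φ c)).hasFDerivAt.comp x ((hasFDerivAt_id x).sub_const c)
  exact (hφ.hasGradientAt.hasFDerivAt.sub hlin).sub_const (φ c)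

theorem ConvexOn.sub_le_inner_of_isMinOn_add {K : Set E} {θ f : E → ℝ} {g x y : E}
    (hθ : ConvexOn ℝ K θ) (hf : HasGradientAt f g x) (hx : x ∈ K) (hy : y ∈ K)
    (hmin : IsMinOn (θ + f) K x) : θ x - θ y ≤ ⟪g, y - x⟫ :=
  hθ.sub_le_fderiv_of_isMinOn_add hf.hasFDerivAt hx hy hmin

end Inner

theorem composite_mirror_descent_one_step_general {d : ℕ}
    (K : Set (EuclideanSpace ℝ (Fin d)))
    (φ : EuclideanSpace ℝ (Fin d) → ℝ) (hφ : Differentiable ℝ φ)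
    (V : EuclideanSpace ℝ (Fin d) → EuclideanSpace ℝ (Fin d) → ℝ)
    (hV : ∀ c x, V c x = φ x - ⟪gradient φ c, x - c⟫ - φ c)
    (θ : EuclideanSpace ℝ (Fin d) → ℝ) (hθ : ConvexOn ℝ K θ)
    (c : EuclideanSpace ℝ (Fin d))
    (xplus : EuclideanSpace ℝ (Fin d)) (hmem : xplus ∈ K)
    (hopt : ∀ w ∈ K, θ xplus + V c xplus ≤ θ w + V c w) :
    ∀ xstar ∈ K, θ xplus - θ xstar ≤ V c xstar - V xplus xstar - V c xplus := by
  obtain rfl : V = bregmanDiv φ := funext₂ hV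
  intro xstar hxstar
  rw [bregmanDiv_sub_bregmanDiv_sub_bregmanDiv]
  exact hθ.sub_le_inner_of_isMinOn_add (hasGradientAt_bregmanDiv (hφ xplus) c) hmem hxstar hopt

/-- Property 1 of Tseng 2008: composite one-step Mirror-Descent inequality.
If `x⁺` minimizes `x ↦ θ(x) + V_c(x)` over the convex set `𝒦` for a convex `θ`, then for
every `x* ∈ 𝒦`, `θ(x⁺) - θ(x*) ≤ V_c(x*) - V_{x⁺}(x*) - V_c(x⁺)`. -/
theorem composite_mirror_descent_one_step {d : ℕ}
    (K : Set (EuclideanSpace ℝ (Fin d))) (hK : Convex ℝ K)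
    (φ : EuclideanSpace ℝ (Fin d) → ℝ) (hφ : Differentiable ℝ φ)
    (V : EuclideanSpace ℝ (Fin d) → EuclideanSpace ℝ (Fin d) → ℝ)
    (hV : ∀ c x, V c x = φ x - ⟪gradient φ c, x - c⟫ - φ c)
    (θ : EuclideanSpace ℝ (Fin d) → ℝ) (hθ : ConvexOn ℝ K θ)
    (c : EuclideanSpace ℝ (Fin d)) (hc : c ∈ K)
    (xplus : EuclideanSpace ℝ (Fin d)) (hmem : xplus ∈ K)
    (hopt : ∀ w ∈ K, θ xplus + V c xplus ≤ θ w + V c w) :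
    ∀ xstar ∈ K, θ xplus - θ xstar ≤ V c xstar - V xplus xstar - V c xplus :=
  composite_mirror_descent_one_step_general K φ hφ V hV θ hθ c xplus hmem hopt
end
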